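/- Let T be the tile of a weakly robust periodic solution with spatial period σ = 2 and temporal period τ, and let ℓ = p(T) − s(T) be its lag. Then rank(T) ≥ 2/gcd(τ, 2) − ℓ; that is, rank(T) ≥ 1 − ℓ if τ is even, and rank(T) ≥ 2 − ℓ if τ is odd. -/

import Mathlib

open Filter

/-- An `n`-state 2-neighbor cellular automaton rule. -/
abbrev CARule (n : ℕ) := Fin n → Fin n → Fin n

/-- One step of the CA evolution: `ξ_{t+1}(x) = f(ξ_t(x-1), ξ_t(x))`. -/
def caStep {n : ℕ} (f : CARule n) (ξ : ℤ → Fin n) : ℤ → Fin n :=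
  fun x => f (ξ (x - 1)) (ξ x)

/-- The trajectory of an initial configuration under the rule `f`. -/
def caTraj {n : ℕ} (f : CARule n) (ξ : ℤ → Fin n) : ℕ → ℤ → Fin n
  | 0 => ξ
  | t + 1 => caStep f (caTraj f ξ t)

/-- `ξ` is (the initial configuration of) a periodic solution of `f` with
minimal temporal period `τ` and minimal spatial period `σ`. -/
def IsPS {n : ℕ} (f : CARule n) (ξ : ℤ → Fin n) (τ σ : ℕ) : Prop :=
  0 < τ ∧ 0 < σ ∧
  (∀ x : ℤ, ξ (x + (σ : ℤ)) = ξ x) ∧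
  (∀ σ' : ℕ, 0 < σ' → (∀ x : ℤ, ξ (x + (σ' : ℤ)) = ξ x) → σ ≤ σ') ∧
  caTraj f ξ τ = ξ ∧
  (∀ τ' : ℕ, 0 < τ' → caTraj f ξ τ' = ξ → τ ≤ τ')

/-- `η` is a proper initial configuration for the periodic solution `ξ`:
it agrees with `ξ` at all sites `≤ y` for some `y`. -/
def IsProper {n : ℕ} (ξ η : ℤ → Fin n) : Prop :=
  ∃ y : ℤ, ∀ x ≤ y, η x = ξ x

/-- The periodic solution `ξ` of `f` is weakly robust: the expansion velocity is
positive, i.e. there is `v > 0` such that for every proper initial configuration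
`η`, eventually (in `t`) the two trajectories agree at all sites `x ≤ v·t`
(equivalently, `inf_η liminf_t s_t(η)/t > 0`). -/
def IsWeaklyRobust {n : ℕ} (f : CARule n) (ξ : ℤ → Fin n) : Prop :=
  ∃ v : ℝ, 0 < v ∧ ∀ η : ℤ → Fin n, IsProper ξ η →
    ∀ᶠ t : ℕ in atTop, ∀ x : ℤ, (x : ℝ) ≤ v * t → caTraj f η t x = caTraj f ξ t x

/-- The label (τ-periodic sequence) `A` right-extends to `B` under `f`: `A → B`. -/
def RightExtends {n : ℕ} (f : CARule n) (A B : ℕ → Fin n) : Prop :=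
  ∀ i : ℕ, f (A i) (B i) = B (i + 1)

/-- The sequence `c_{j+1} = f(a_j, c_j)` started at `c₀`. -/
def chaseSeq {n : ℕ} (f : CARule n) (A : ℕ → Fin n) (c₀ : Fin n) : ℕ → Fin n
  | 0 => c₀
  | j + 1 => f (A j) (chaseSeq f A c₀ j)

/-- The label `A` decides `B` under `f`: `A ⇒ B`. -/
def Decides {n : ℕ} (f : CARule n) (A B : ℕ → Fin n) : Prop :=
  RightExtends f A B ∧ ∀ c₀ : Fin n, ∃ j : ℕ, chaseSeq f A c₀ j = B j

/-- `T` is a (τ,σ)-periodic array (row index mod τ, column index mod σ). -/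
def IsTilePeriodic {n : ℕ} (τ σ : ℕ) (T : ℕ → ℕ → Fin n) : Prop :=
  (∀ i j, T (i + τ) j = T i j) ∧ (∀ i j, T i (j + σ) = T i j)

/-- The set of states appearing in the tile `T`. -/
def tileStates (n τ σ : ℕ) (T : ℕ → ℕ → Fin n) : Finset (Fin n) :=
  (Finset.range τ ×ˢ Finset.range σ).image fun p => T p.1 p.2

/-- The set of horizontally adjacent pairs appearing in the tile `T`. -/
def tilePairs (n τ σ : ℕ) (T : ℕ → ℕ → Fin n) : Finset (Fin n × Fin n) :=
  (Finset.range τ ×ˢ Finset.range σ).image fun p => (T p.1 p.2, T p.1 (p.2 + 1))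

/-- `T` is a tile of a periodic solution: uniqueness of assignment, each row has
minimal period `σ`, and the cyclic sequence of rows has minimal period `τ`. -/
def IsPSTile (n τ σ : ℕ) (T : ℕ → ℕ → Fin n) : Prop :=
  IsTilePeriodic τ σ T ∧
  (∀ i j k m, T i j = T k m → T i (j + 1) = T k (m + 1) →
      T (i + 1) (j + 1) = T (k + 1) (m + 1)) ∧
  (∀ i : ℕ, ∀ σ' : ℕ, 0 < σ' → (∀ j, T i (j + σ') = T i j) → σ ≤ σ') ∧
  (∀ τ' : ℕ, 0 < τ' → (∀ i j, T (i + τ') j = T i j) → τ ≤ τ')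

/-- `T` is a tile of a periodic solution of the given rule `f`. -/
def IsPSTileOf {n : ℕ} (f : CARule n) (τ σ : ℕ) (T : ℕ → ℕ → Fin n) : Prop :=
  IsTilePeriodic τ σ T ∧
  (∀ i j, f (T i j) (T i (j + 1)) = T (i + 1) (j + 1)) ∧
  (∀ i : ℕ, ∀ σ' : ℕ, 0 < σ' → (∀ j, T i (j + σ') = T i j) → σ ≤ σ') ∧
  (∀ τ' : ℕ, 0 < τ' → (∀ i j, T (i + τ') j = T i j) → τ ≤ τ')

/-- `T` is simple: the assignment number `p(T)` equals the number of states `s(T)`. -/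
def IsSimpleTile (n τ σ : ℕ) (T : ℕ → ℕ → Fin n) : Prop :=
  (tilePairs n τ σ T).card = (tileStates n τ σ T).card

/-- The rank of a tile: the largest `x` such that some `x` columns of `T`
together contain `x * τ` pairwise distinct states. -/
noncomputable def tileRank (n τ σ : ℕ) (T : ℕ → ℕ → Fin n) : ℕ :=
  sSup {x : ℕ | ∃ J : Finset ℕ, J ⊆ Finset.range σ ∧ J.card = x ∧
    ((J ×ˢ Finset.range τ).image fun p => T p.2 p.1).card = x * τ}

/-- The tile of the periodic solution `ξ` of `f`: `a_{i,j} = ξ_i(j)`. -/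
def psTile {n : ℕ} (f : CARule n) (ξ : ℤ → Fin n) : ℕ → ℕ → Fin n :=
  fun i j => caTraj f ξ i (j : ℤ)

/-!
Let `A_i, B_i` be the two columns of the tile, so its pairs are the `(A_i, B_i)` and the
`(B_i, A_i)`. A row is determined by its two entries and the `τ` rows are distinct, so each of
these two families has `τ` elements. Projecting pairs to their first entry gives
`ℓ ≥ τ - #{A_i}`, so `ℓ = 0` makes column `A` consist of `τ` distinct states: rank `≥ 1`.

For odd `τ` the two families are disjoint. Let `F` be the global map of the rule and `S` the
one-site shift, which commute. A common pair makes some row the shift `S (F^k ξ)` of another,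
so `S ξ = F^d ξ` lies on the orbit of `ξ`; then `ξ = S² ξ = F^{2d} ξ`, so `τ ∣ 2d`, hence
`τ ∣ d` and `S ξ = ξ`, contradicting `σ = 2`. Thus `p = 2τ`, and `s ≥ 2τ - 1`
(resp. `s = 2τ`) forces one full column (resp. two).
-/

open Function

theorem Finset.card_add_card_image_le_of_subset {α β : Type*} [DecidableEq α] [DecidableEq β]
    (g : α → β) {s t : Finset α} (hst : s ⊆ t) :
    s.card + (t.image g).card ≤ t.card + (s.image g).card := by
  have hcover : t.image g ⊆ s.image g ∪ (t \ s).image g := by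
    rw [← Finset.image_union, Finset.union_sdiff_of_subset hst]
  have := Finset.card_le_card hcover
  have := Finset.card_union_le (s.image g) ((t \ s).image g)
  have := Finset.card_image_le (s := t \ s) (f := g)
  have := Finset.card_sdiff_add_card_eq_card hst
  omega

section Tiles

variable {n : ℕ}

def tileColumn (τ : ℕ) (T : ℕ → ℕ → Fin n) (j : ℕ) : Finset (Fin n) :=
  (Finset.range τ).image fun i => T i j

def tileColumnPairs (τ : ℕ) (T : ℕ → ℕ → Fin n) (j : ℕ) : Finset (Fin n × Fin n) :=
  (Finset.range τ).image fun i => (T i j, T i (j + 1))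

variable {τ σ : ℕ} {T : ℕ → ℕ → Fin n}

theorem card_tileColumn_le (j : ℕ) : (tileColumn τ T j).card ≤ τ :=
  Finset.card_image_le.trans (Finset.card_range τ).le

theorem image_fst_tileColumnPairs (j : ℕ) :
    (tileColumnPairs τ T j).image Prod.fst = tileColumn τ T j := by
  rw [tileColumnPairs, Finset.image_image]; rfl

theorem image_fst_tilePairs : (tilePairs n τ σ T).image Prod.fst = tileStates n τ σ T := by
  rw [tilePairs, Finset.image_image]; rfl

theorem biUnion_tileColumn (J : Finset ℕ) :
    J.biUnion (tileColumn τ T) = (J ×ˢ Finset.range τ).image fun p => T p.2 p.1 := by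
  ext; simp [tileColumn, and_assoc]

theorem tileStates_eq_biUnion :
    tileStates n τ σ T = (Finset.range σ).biUnion (tileColumn τ T) := by
  ext
  simp only [tileStates, tileColumn, Finset.mem_image, Finset.mem_product, Finset.mem_range,
    Finset.mem_biUnion, Prod.exists]
  grind

theorem tilePairs_eq_biUnion :
    tilePairs n τ σ T = (Finset.range σ).biUnion (tileColumnPairs τ T) := by
  ext
  simp only [tilePairs, tileColumnPairs, Finset.mem_image, Finset.mem_product, Finset.mem_range,
    Finset.mem_biUnion, Prod.exists]
  grind

theorem tileStates_two : tileStates n τ 2 T = tileColumn τ T 0 ∪ tileColumn τ T 1 := by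
  simp [tileStates_eq_biUnion, Finset.range_add_one, Finset.union_comm]

theorem tilePairs_two : tilePairs n τ 2 T = tileColumnPairs τ T 0 ∪ tileColumnPairs τ T 1 := by
  simp [tilePairs_eq_biUnion, Finset.range_add_one, Finset.union_comm]

theorem card_tileColumnPairs_add_card_tileStates_le {j : ℕ} (hj : j < σ) :
    (tileColumnPairs τ T j).card + (tileStates n τ σ T).card ≤
      (tilePairs n τ σ T).card + (tileColumn τ T j).card := by
  rw [← image_fst_tilePairs, ← image_fst_tileColumnPairs]
  refine Finset.card_add_card_image_le_of_subset Prod.fst ?_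
  rw [tilePairs_eq_biUnion]
  exact Finset.subset_biUnion_of_mem _ (Finset.mem_range.mpr hj)

theorem card_le_tileRank {J : Finset ℕ} (hJ : J ⊆ Finset.range σ)
    (hcard : (J.biUnion (tileColumn τ T)).card = J.card * τ) : J.card ≤ tileRank n τ σ T := by
  refine le_csSup ⟨σ, ?_⟩ ⟨J, hJ, rfl, by rwa [← biUnion_tileColumn]⟩
  rintro x ⟨J', hJ', rfl, -⟩
  simpa using Finset.card_le_card hJ'

theorem one_le_tileRank {j : ℕ} (hj : j < σ) (hcard : (tileColumn τ T j).card = τ) :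
    1 ≤ tileRank n τ σ T := by
  simpa using card_le_tileRank (J := {j}) (by simpa using hj) (by simpa using hcard)

theorem le_tileRank_of_card_tileStates (hcard : (tileStates n τ σ T).card = σ * τ) :
    σ ≤ tileRank n τ σ T := by
  simpa using card_le_tileRank (J := Finset.range σ) le_rfl
    (by rwa [← tileStates_eq_biUnion, Finset.card_range])

end Tiles

theorem Function.Commute.apply_eq_self_of_odd_minimalPeriod {α : Type*} {F S : α → α}
    (hFS : Function.Commute F S) {x : α} (hSS : S (S x) = x) (hodd : Odd (minimalPeriod F x))
    {i k : ℕ} (h : F^[i] x = F^[k] (S x)) : S x = x := by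
  set p := minimalPeriod F x
  have hp : 0 < p := hodd.pos
  have hx : IsPeriodicPt F p x := isPeriodicPt_minimalPeriod F x
  obtain ⟨d, hd⟩ : ∃ d, S x = F^[d] x := by
    refine ⟨p * k - k + i, ?_⟩
    have hSx : IsPeriodicPt F (p * k) (S x) := (hx.map hFS.symm).mul_const k
    rw [iterate_add_apply, h, ← iterate_add_apply,
      Nat.sub_add_cancel (Nat.le_mul_of_pos_left k hp), hSx.eq]
  have h2d : IsPeriodicPt F (2 * d) x := by
    rw [IsPeriodicPt, IsFixedPt, two_mul, iterate_add_apply, ← hd,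
      (hFS.iterate_left d).eq, ← hd, hSS]
  have hpd : p ∣ d := (Nat.coprime_two_right.mpr hodd).dvd_of_dvd_mul_left h2d.minimalPeriod_dvd
  rw [hd]
  exact (isPeriodicPt_iff_minimalPeriod_dvd.mpr hpd).eq

theorem Function.Periodic.eq_of_eq_zero_of_eq_one {α : Type*} {g h : ℤ → α}
    (hg : Periodic g 2) (hh : Periodic h 2) (h0 : g 0 = h 0) (h1 : g 1 = h 1) : g = h := by
  funext x
  rw [← hg.sub_int_mul_eq (x / 2), ← hh.sub_int_mul_eq (x / 2), Int.cast_id]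
  obtain hx | hx : x - x / 2 * 2 = 0 ∨ x - x / 2 * 2 = 1 := by omega
  all_goals rwa [hx]

section CellularAutomaton

variable {n : ℕ} (f : CARule n)

theorem caTraj_eq_iterate (ξ : ℤ → Fin n) (t : ℕ) : caTraj f ξ t = (caStep f)^[t] ξ := by
  induction t with
  | zero => rfl
  | succ t ih => rw [iterate_succ_apply', ← ih]; rfl

theorem commute_caStep_translate (c : ℤ) : Function.Commute (caStep f) (translate c) := by
  intro η
  funext x
  simp [caStep, sub_right_comm]

theorem periodic_caTraj {ξ : ℤ → Fin n} {c : ℤ} (hξ : Periodic ξ c) (t : ℕ) :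
    Periodic (caTraj f ξ t) c := by
  have htr : translate (-c) ξ = ξ := funext fun x => by simpa using hξ x
  have hcomm := (commute_caStep_translate f (-c)).iterate_left t ξ
  rw [htr] at hcomm
  intro x
  simpa [caTraj_eq_iterate] using (congrFun hcomm x).symm

end CellularAutomaton

namespace IsPS

variable {n τ σ : ℕ} {f : CARule n} {ξ : ℤ → Fin n}

theorem minimalPeriod_eq (hPS : IsPS f ξ τ σ) : minimalPeriod (caStep f) ξ = τ := by
  obtain ⟨hτ, -, -, -, hper, hmin⟩ := hPS
  have hξ : IsPeriodicPt (caStep f) τ ξ := by rwa [caTraj_eq_iterate] at hper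
  refine le_antisymm (hξ.minimalPeriod_le hτ) (hmin _ (hξ.minimalPeriod_pos hτ) ?_)
  rw [caTraj_eq_iterate]
  exact iterate_minimalPeriod

theorem periodic_two (hPS : IsPS f ξ τ 2) : Periodic ξ 2 := by
  obtain ⟨-, -, hper, -⟩ := hPS
  exact fun x => by simpa using hper x

theorem psTile_two (hPS : IsPS f ξ τ 2) (i : ℕ) : psTile f ξ i 2 = psTile f ξ i 0 :=
  (periodic_caTraj f hPS.periodic_two i).eq

theorem caTraj_eq_of_psTile_eq (hPS : IsPS f ξ τ 2) {i k : ℕ}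
    (h0 : psTile f ξ i 0 = psTile f ξ k 0) (h1 : psTile f ξ i 1 = psTile f ξ k 1) :
    caTraj f ξ i = caTraj f ξ k :=
  (periodic_caTraj f hPS.periodic_two i).eq_of_eq_zero_of_eq_one
    (periodic_caTraj f hPS.periodic_two k) h0 h1

theorem card_tileColumnPairs_zero (hPS : IsPS f ξ τ 2) :
    (tileColumnPairs τ (psTile f ξ) 0).card = τ := by
  rw [tileColumnPairs, Finset.card_image_of_injOn, Finset.card_range]
  intro i hi k hk hik
  rw [Prod.mk.injEq] at hik
  have hrow := hPS.caTraj_eq_of_psTile_eq hik.1 hik.2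
  rw [caTraj_eq_iterate, caTraj_eq_iterate] at hrow
  rw [Finset.coe_range, ← hPS.minimalPeriod_eq] at hi hk
  exact iterate_injOn_Iio_minimalPeriod hi hk hrow

theorem tileColumnPairs_one (hPS : IsPS f ξ τ 2) :
    tileColumnPairs τ (psTile f ξ) 1 = (tileColumnPairs τ (psTile f ξ) 0).image Prod.swap := by
  simp only [tileColumnPairs, Finset.image_image]
  congr 1
  funext i
  simp [hPS.psTile_two]

theorem card_tileColumnPairs_one (hPS : IsPS f ξ τ 2) :
    (tileColumnPairs τ (psTile f ξ) 1).card = τ := by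
  rw [hPS.tileColumnPairs_one, Finset.card_image_of_injective _ Prod.swap_injective,
    hPS.card_tileColumnPairs_zero]

theorem translate_one_ne_self (hPS : IsPS f ξ τ 2) : translate 1 ξ ≠ ξ := by
  obtain ⟨-, -, -, hσmin, -, -⟩ := hPS
  intro h
  have := hσmin 1 one_pos fun x => by simpa using (congrFun h (x + 1)).symm
  omega

theorem disjoint_tileColumnPairs (hPS : IsPS f ξ τ 2) (hodd : Odd τ) :
    Disjoint (tileColumnPairs τ (psTile f ξ) 0) (tileColumnPairs τ (psTile f ξ) 1) := by
  rw [hPS.tileColumnPairs_one, Finset.disjoint_left]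
  intro _ hi hk
  obtain ⟨i, -, rfl⟩ := Finset.mem_image.mp hi
  obtain ⟨_, hk, hik⟩ := Finset.mem_image.mp hk
  obtain ⟨k, -, rfl⟩ := Finset.mem_image.mp hk
  simp only [Prod.swap_prod_mk, Prod.mk.injEq, zero_add] at hik
  have hξ := hPS.periodic_two
  have hrow : caTraj f ξ i = translate 1 (caTraj f ξ k) := by
    refine (periodic_caTraj f hξ i).eq_of_eq_zero_of_eq_one ?_ ?_ ?_
    · intro x
      simp [add_sub_right_comm, (periodic_caTraj f hξ k) (x - 1)]
    · simpa [psTile, ← (periodic_caTraj f hξ k).sub_eq 1] using hik.1.symm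
    · simpa [psTile] using hik.2.symm
  rw [caTraj_eq_iterate, caTraj_eq_iterate,
    ← (commute_caStep_translate f 1).iterate_left k ξ] at hrow
  have hshift : translate 1 (translate 1 ξ) = ξ := by
    rw [translate_translate]
    exact funext fun x => hξ.sub_eq x
  exact hPS.translate_one_ne_self <|
    (commute_caStep_translate f 1).apply_eq_self_of_odd_minimalPeriod hshift
      (by rwa [hPS.minimalPeriod_eq]) hrow

end IsPS

theorem wrps_rank_bound_sigma_two_general {n : ℕ} (f : CARule n) (ξ : ℤ → Fin n)
    (τ : ℕ) (hPS : IsPS f ξ τ 2) :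
    ((2 / Nat.gcd τ 2 : ℕ) : ℤ) -
        (((tilePairs n τ 2 (psTile f ξ)).card : ℤ) -
          ((tileStates n τ 2 (psTile f ξ)).card : ℤ))
      ≤ (tileRank n τ 2 (psTile f ξ) : ℤ) := by
  set T := psTile f ξ
  have hcol0 := card_tileColumn_le (τ := τ) (T := T) 0
  have hcol1 := card_tileColumn_le (τ := τ) (T := T) 1
  rcases Nat.even_or_odd τ with heven | hodd
  · have hlag := card_tileColumnPairs_add_card_tileStates_le (T := T) (τ := τ) two_pos
    rw [hPS.card_tileColumnPairs_zero] at hlag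
    rw [Nat.gcd_eq_right heven.two_dvd]
    by_cases h0 : (tileColumn τ T 0).card = τ
    · have := one_le_tileRank (σ := 2) two_pos h0
      omega
    · omega
  · have hpairs : (tilePairs n τ 2 T).card = 2 * τ := by
      rw [tilePairs_two, Finset.card_union_of_disjoint (hPS.disjoint_tileColumnPairs hodd),
        hPS.card_tileColumnPairs_zero, hPS.card_tileColumnPairs_one, two_mul]
    have hstates :
        (tileStates n τ 2 T).card ≤ (tileColumn τ T 0).card + (tileColumn τ T 1).card :=
      tileStates_two (T := T) ▸ Finset.card_union_le _ _
    rw [hpairs, (Nat.coprime_two_right.mpr hodd).gcd_eq_one]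
    by_cases hfull : (tileStates n τ 2 T).card = 2 * τ
    · have := le_tileRank_of_card_tileStates hfull
      omega
    by_cases h0 : (tileColumn τ T 0).card = τ
    · have := one_le_tileRank (σ := 2) two_pos h0
      omega
    by_cases h1 : (tileColumn τ T 1).card = τ
    · have := one_le_tileRank (σ := 2) one_lt_two h1
      omega
    omega

/-- for the tile `T` of a weakly robust periodic solution with
spatial period `σ = 2` and temporal period `τ`, with lag `ℓ = p(T) − s(T)`,
one has `rank(T) ≥ 2/gcd(τ,2) − ℓ`. -/
theorem wrps_rank_bound_sigma_two {n : ℕ} (f : CARule n) (ξ : ℤ → Fin n)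
    (τ : ℕ) (hPS : IsPS f ξ τ 2) (hWR : IsWeaklyRobust f ξ) :
    ((2 / Nat.gcd τ 2 : ℕ) : ℤ) -
        (((tilePairs n τ 2 (psTile f ξ)).card : ℤ) -
          ((tileStates n τ 2 (psTile f ξ)).card : ℤ))
      ≤ (tileRank n τ 2 (psTile f ξ) : ℤ) :=
  wrps_rank_bound_sigma_two_general f ξ τ hPS
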